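/- arXiv:2507.12054 — 8 statements merged into one kernel-verified Lean document; each statement's English description precedes it below -/
import Mathlib

section
/- Fix x in the open interval (0,1). Then the function n ↦ (1 - x^n)/(n · x^(n-1)) is nondecreasing in n on (0, ∞). -/
/-- Fix `x ∈ (0,1)`. Then `n ↦ (1 - x^n)/(n · x^(n-1))` is nondecreasing on `(0, ∞)`. -/
theorem stmt3 (x : ℝ) (hx0 : 0 < x) (hx1 : x < 1) :
    MonotoneOn (fun n : ℝ => (1 - x ^ n) / (n * x ^ (n - 1))) (Set.Ioi 0) := by
  have hL : Real.log x < 0 := Real.log_neg hx0 hx1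
  set L := Real.log x with hLdef
  have key : ∀ n ∈ Set.Ioi (0:ℝ), (1 - x ^ n) / (n * x ^ (n - 1))
      = (-L) * x * ((Real.exp (-L * n) - 1) / (-L * n)) := by
    intro n hn
    have hn0 : (0:ℝ) < n := hn
    have hx : x = Real.exp L := (Real.exp_log hx0).symm
    have aux : x * (Real.exp (-L*n) - 1) * Real.exp (L*(n-1)) = 1 - Real.exp (L*n) := by
      rw [hx, mul_sub, mul_one, ← Real.exp_add, sub_mul, ← Real.exp_add, ← Real.exp_add,
        show L + -L*n + L*(n-1) = 0 by ring, show L + L*(n-1) = L*n by ring, Real.exp_zero]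
    rw [Real.rpow_def_of_pos hx0, Real.rpow_def_of_pos hx0, ← hLdef, ← aux]
    have h1 : Real.exp (L*(n-1)) ≠ 0 := (Real.exp_pos _).ne'
    have h2 : L ≠ 0 := hL.ne
    field_simp
  have hmono : MonotoneOn (slope Real.exp 0) (Set.univ \ {0}) :=
    convexOn_exp.slope_mono (Set.mem_univ 0)
  intro a ha b hb hab
  have ha0 : (0:ℝ) < a := ha
  have hb0 : (0:ℝ) < b := hb
  dsimp only
  rw [key a ha, key b hb]
  have hLa : 0 < -L * a := by nlinarith
  have hLb : 0 < -L * b := by nlinarith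
  have habL : -L * a ≤ -L * b := by nlinarith
  have hsl : slope Real.exp 0 (-L * a) ≤ slope Real.exp 0 (-L * b) :=
    hmono ⟨Set.mem_univ _, by simpa using hLa.ne'⟩ ⟨Set.mem_univ _, by simpa using hLb.ne'⟩ habL
  simp only [slope, Real.exp_zero, vsub_eq_sub, sub_zero, smul_eq_mul] at hsl
  have hdiv : (Real.exp (-L*a) - 1) / (-L*a) ≤ (Real.exp (-L*b) - 1) / (-L*b) := by
    rw [div_eq_inv_mul, div_eq_inv_mul]; exact hsl
  have hxL : 0 < -L * x := by nlinarith
  nlinarith [hdiv]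
end

section
/- Fix an integer n ≥ 1. The function g(x) = n · x^(n-1) · (1 - x) / (1 - x^n) is nondecreasing on the interval (0, 1). -/
/-- Fix an integer `n ≥ 1`. Then `g(x) = n·x^(n-1)·(1-x)/(1-x^n)` is nondecreasing
on `(0,1)`. -/
theorem stmt4 (n : ℕ) (hn : 1 ≤ n) :
    MonotoneOn (fun x : ℝ => (n : ℝ) * x ^ (n - 1) * (1 - x) / (1 - x ^ n))
      (Set.Ioo (0 : ℝ) 1) := by
  have key : ∀ z : ℝ, (1 - z ^ n) = (1 - z) * ∑ k ∈ Finset.range n, z ^ k := by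
    intro z
    calc 1 - z ^ n = -((∑ i ∈ Finset.range n, z ^ i) * (z - 1)) := by
          rw [geom_sum_mul]; ring
      _ = (1 - z) * ∑ k ∈ Finset.range n, z ^ k := by ring
  intro x hx y hy hxy
  obtain ⟨hx0, hx1⟩ := hx
  obtain ⟨hy0, hy1⟩ := hy
  have hne : (Finset.range n).Nonempty := by
    rw [Finset.nonempty_range_iff]; omega
  have hSx : 0 < ∑ k ∈ Finset.range n, x ^ k :=
    Finset.sum_pos (fun k _ => pow_pos hx0 k) hne
  have hSy : 0 < ∑ k ∈ Finset.range n, y ^ k :=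
    Finset.sum_pos (fun k _ => pow_pos hy0 k) hne
  have hxn : (0:ℝ) < 1 - x ^ n := by
    have := pow_lt_one₀ hx0.le hx1 (by omega : n ≠ 0)
    linarith
  have hyn : (0:ℝ) < 1 - y ^ n := by
    have := pow_lt_one₀ hy0.le hy1 (by omega : n ≠ 0)
    linarith
  have h1x : (0:ℝ) < 1 - x := by linarith
  have h1y : (0:ℝ) < 1 - y := by linarith
  have core : x ^ (n-1) * ∑ k ∈ Finset.range n, y ^ k ≤
      y ^ (n-1) * ∑ k ∈ Finset.range n, x ^ k := by
    rw [Finset.mul_sum, Finset.mul_sum]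
    apply Finset.sum_le_sum
    intro k hk
    have hk' : k < n := Finset.mem_range.mp hk
    set a := n - 1 - k with ha
    have hdecomp : n - 1 = k + a := by omega
    calc x ^ (n-1) * y ^ k = (x*y)^k * x ^ a := by
          rw [hdecomp, pow_add, mul_pow]; ring
      _ ≤ (x*y)^k * y ^ a := by
          apply mul_le_mul_of_nonneg_left (pow_le_pow_left₀ hx0.le hxy _)
          positivity
      _ = y ^ (n-1) * x ^ k := by rw [hdecomp, pow_add, mul_pow]; ring
  simp only
  rw [div_le_div_iff₀ hxn hyn, key x, key y]
  calc (n:ℝ) * x^(n-1) * (1-x) * ((1-y) * ∑ k ∈ Finset.range n, y ^ k)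
      = (n:ℝ) * ((1-x)*(1-y)) * (x^(n-1) * ∑ k ∈ Finset.range n, y ^ k) := by ring
    _ ≤ (n:ℝ) * ((1-x)*(1-y)) * (y^(n-1) * ∑ k ∈ Finset.range n, x ^ k) := by
        apply mul_le_mul_of_nonneg_left core
        exact mul_nonneg n.cast_nonneg (le_of_lt (mul_pos h1x h1y))
    _ = (n:ℝ) * y^(n-1) * (1-y) * ((1-x) * ∑ k ∈ Finset.range n, x ^ k) := by ring
end

section
/- Let F be a CDF supported on [w̲, w̄] with 0 ≤ w̲ ≤ w̄, and suppose that for all z in [w̲, w̄], the survival probability satisfies z · (1 - F(z)) ≤ R for some constant R with w̲ ≤ R ≤ w̄. Then ∫₀^∞ (1 - F(z)) dz ≤ R · (1 + ln(w̄/R)). -/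
open MeasureTheory

/-- Let `F` be a CDF supported on `[w̲, w̄]` with `0 ≤ w̲ ≤ w̄`, and suppose that for
all `z ∈ [w̲, w̄]`, `z·(1 - F z) ≤ R` for some `R` with `w̲ ≤ R ≤ w̄`. Then
`∫₀^∞ (1 - F z) dz ≤ R · (1 + ln(w̄/R))`. -/
theorem stmt7 (wl wu R : ℝ) (F : ℝ → ℝ)
    (hwl : 0 ≤ wl) (hw : wl ≤ wu)
    (hFmono : Monotone F) (hF0 : ∀ z, 0 ≤ F z) (hF1 : ∀ z, F z ≤ 1)
    (hsupp0 : ∀ z, z < wl → F z = 0) (hsupp1 : ∀ z, wu ≤ z → F z = 1)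
    (hRl : wl ≤ R) (hRu : R ≤ wu)
    (hrev : ∀ z ∈ Set.Icc wl wu, z * (1 - F z) ≤ R) :
    ∫ z in Set.Ioi (0 : ℝ), (1 - F z) ≤ R * (1 + Real.log (wu / R)) := by
  have hR0 : 0 ≤ R := le_trans hwl hRl
  have hwu0 : 0 ≤ wu := le_trans hwl hw
  set f : ℝ → ℝ := fun z => 1 - F z with hfdef
  have hfmeas : Measurable f := measurable_const.sub hFmono.measurable
  have hfnonneg : ∀ z, 0 ≤ f z := fun z => by simp [hfdef]; exact hF1 z
  have hfle1 : ∀ z, f z ≤ 1 := fun z => by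
    have := hF0 z; simp [hfdef]; linarith
  have hfzero : ∀ z, wu ≤ z → f z = 0 := fun z hz => by simp [hfdef, hsupp1 z hz]
  -- case R = 0
  rcases eq_or_lt_of_le hR0 with hR0' | hRpos
  · have hfz : ∀ z ∈ Set.Ioi (0:ℝ), f z = 0 := by
      intro z hz
      rcases le_or_gt wu z with h | h
      · exact hfzero z h
      · have hz0 : (0:ℝ) < z := hz
        have hmem : z ∈ Set.Icc wl wu := ⟨le_trans (hRl.trans hR0'.symm.le) hz0.le, h.le⟩
        have := hrev z hmem
        have hge : 0 ≤ z * f z := mul_nonneg hz0.le (hfnonneg z)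
        have : z * f z = 0 := le_antisymm (by simpa [← hR0'] using this) hge
        have := (mul_eq_zero.1 this).resolve_left (ne_of_gt hz0)
        exact this
    rw [setIntegral_congr_fun measurableSet_Ioi hfz]
    simp [← hR0']
  -- main case R > 0
  have hintIoc : ∀ a b : ℝ, IntegrableOn f (Set.Ioc a b) := by
    intro a b
    refine Integrable.mono' (g := fun _ => (1:ℝ))
      (integrableOn_const measure_Ioc_lt_top.ne) hfmeas.aestronglyMeasurable ?_
    filter_upwards with z
    rw [Real.norm_eq_abs, abs_of_nonneg (hfnonneg z)]
    exact hfle1 z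
  have hsplit0 : Set.Ioi (0:ℝ) = Set.Ioc 0 wu ∪ Set.Ioi wu := (Set.Ioc_union_Ioi_eq_Ioi hwu0).symm
  have hItail : ∫ z in Set.Ioi wu, f z = 0 := by
    rw [setIntegral_congr_fun measurableSet_Ioi (fun z hz => hfzero z (le_of_lt hz))]
    simp
  have hintTail : IntegrableOn f (Set.Ioi wu) := by
    refine (integrableOn_congr_fun (fun z hz => hfzero z (le_of_lt hz)) measurableSet_Ioi).2 ?_
    simp [IntegrableOn]
  have hstep1 : ∫ z in Set.Ioi (0:ℝ), f z = (∫ z in Set.Ioc 0 R, f z) + ∫ z in Set.Ioc R wu, f z := by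
    rw [hsplit0, setIntegral_union (Set.Ioc_disjoint_Ioi le_rfl) measurableSet_Ioi (hintIoc 0 wu) hintTail,
      hItail, add_zero,
      ← Set.Ioc_union_Ioc_eq_Ioc hR0 hRu,
      setIntegral_union (Set.Ioc_disjoint_Ioc.2 (le_trans inf_le_left le_sup_right)) measurableSet_Ioc (hintIoc 0 R) (hintIoc R wu)]
  rw [hstep1]
  have hb1 : ∫ z in Set.Ioc 0 R, f z ≤ R := by
    calc ∫ z in Set.Ioc 0 R, f z ≤ ∫ _z in Set.Ioc 0 R, (1:ℝ) :=
          setIntegral_mono_on (hintIoc 0 R) (integrableOn_const measure_Ioc_lt_top.ne)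
            measurableSet_Ioc (fun z _ => hfle1 z)
      _ = R := by simp [Real.volume_Ioc, hR0]
  have hg : IntervalIntegrable (fun z => R * (1/z)) volume R wu := by
    refine IntervalIntegrable.const_mul ?_ R
    refine intervalIntegral.intervalIntegrable_one_div (fun x hx => ?_) continuousOn_id
    rw [Set.uIcc_of_le hRu] at hx
    exact ne_of_gt (lt_of_lt_of_le hRpos hx.1)
  have hb2 : ∫ z in Set.Ioc R wu, f z ≤ R * Real.log (wu / R) := by
    have hgIoc : IntegrableOn (fun z => R * (1/z)) (Set.Ioc R wu) :=
      (intervalIntegrable_iff_integrableOn_Ioc_of_le hRu).1 hg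
    calc ∫ z in Set.Ioc R wu, f z ≤ ∫ z in Set.Ioc R wu, R * (1/z) := by
          refine setIntegral_mono_on (hintIoc R wu) hgIoc measurableSet_Ioc ?_
          intro z hz
          have hz0 : 0 < z := lt_of_le_of_lt hRpos.le hz.1
          have hmem : z ∈ Set.Icc wl wu := ⟨le_trans hRl hz.1.le, hz.2⟩
          have h := hrev z hmem
          rw [mul_one_div, le_div_iff₀ hz0]
          have h2 : f z * z = z * (1 - F z) := by simp [hfdef]; ring
          linarith
      _ = R * Real.log (wu / R) := by
          rw [← intervalIntegral.integral_of_le hRu, intervalIntegral.integral_const_mul,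
            integral_one_div (by rw [Set.uIcc_of_le hRu]; rintro ⟨h1, h2⟩; linarith)]
  linarith
end

section
/- For every real t in [0,1] and every natural number n, Σ_{i=0}^{n} binomial(n, i) · t^i · (1-t)^(n-i) · H_i = ∫₀¹ (1 - (t·z + 1 - t)^n)/(1 - z) dz, where H_i is the i-th harmonic number and H_0 = 0. -/
open Finset intervalIntegral MeasureTheory

lemma aux1 (t : ℝ) (n : ℕ) :
    ∑ i ∈ range (n + 1), (n.choose i : ℝ) * t ^ (i + 1) * (1 - t) ^ (n - i) / (i + 1)
      = (1 - (1 - t) ^ (n + 1)) / (n + 1) := by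
  have key : ∀ i, (n.choose i : ℝ) / (i + 1) = ((n+1).choose (i+1) : ℝ) / (n + 1) := by
    intro i
    have h : ((n:ℝ)+1) * n.choose i = ((n+1).choose (i+1) : ℝ) * (i+1) := by
      exact_mod_cast congrArg (Nat.cast : ℕ → ℝ) (Nat.add_one_mul_choose_eq n i)
    field_simp
    linarith [h]
  have hsum : ∑ i ∈ range (n + 1), (n.choose i : ℝ) * t ^ (i + 1) * (1 - t) ^ (n - i) / (i + 1)
      = ∑ i ∈ range (n + 1), (((n+1).choose (i+1) : ℝ) * t ^ (i+1) * (1-t) ^ ((n+1) - (i+1))) / (n+1) := by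
    refine Finset.sum_congr rfl fun i hi => ?_
    have h1 : (n + 1) - (i + 1) = n - i := by omega
    rw [h1]
    calc (n.choose i : ℝ) * t ^ (i + 1) * (1 - t) ^ (n - i) / (i + 1)
        = (n.choose i : ℝ) / (i + 1) * (t ^ (i + 1) * (1 - t) ^ (n - i)) := by ring
      _ = ((n+1).choose (i+1) : ℝ) / (n + 1) * (t ^ (i + 1) * (1 - t) ^ (n - i)) := by rw [key i]
      _ = ((n+1).choose (i+1) : ℝ) * t ^ (i + 1) * (1 - t) ^ (n - i) / (n + 1) := by ring
  rw [hsum, ← Finset.sum_div]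
  congr 1
  have hb := add_pow t (1 - t) (n + 1)
  have hb' : (1:ℝ) = ∑ m ∈ range (n + 2), t ^ m * (1 - t) ^ (n + 1 - m) * ((n+1).choose m) := by
    simpa using hb
  have hsplit := Finset.sum_range_succ' (fun m => t ^ m * (1 - t) ^ (n + 1 - m) * (((n+1).choose m : ℝ))) (n+1)
  simp only [pow_zero, Nat.choose_zero_right, Nat.cast_one, one_mul, mul_one, Nat.sub_zero] at hsplit
  rw [hsplit] at hb'
  have : ∑ i ∈ range (n + 1), ((n+1).choose (i+1) : ℝ) * t ^ (i+1) * (1-t) ^ ((n+1) - (i+1))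
      = ∑ k ∈ range (n + 1), t ^ (k + 1) * (1 - t) ^ (n + 1 - (k + 1)) * (((n+1).choose (k+1) : ℝ)) := by
    refine Finset.sum_congr rfl fun i _ => by ring
  rw [this]
  linarith [hb']

lemma aux2 (t : ℝ) (n : ℕ) :
    ∑ i ∈ range (n + 1),
        (n.choose i : ℝ) * t ^ i * (1 - t) ^ (n - i) *
          (∑ k ∈ range i, (1 : ℝ) / (k + 1))
      = ∑ k ∈ range n, (1 - (1 - t) ^ (k + 1)) / (k + 1) := by
  induction n with
  | zero => simp
  | succ n ih =>
    rw [Finset.sum_range_succ' (fun i => (Nat.choose (n+1) i : ℝ) * t ^ i * (1 - t) ^ (n + 1 - i) *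
          (∑ k ∈ range i, (1 : ℝ) / (k + 1))) (n+1)]
    simp only [range_zero, sum_empty, mul_zero, add_zero]
    have hPascal : ∀ i, ((n+1).choose (i+1) : ℝ) = (n.choose i : ℝ) + (n.choose (i+1) : ℝ) := by
      intro i
      exact_mod_cast Nat.choose_succ_succ n i
    have hH : ∀ i : ℕ, (∑ k ∈ range (i+1), (1:ℝ)/(k+1)) = (∑ k ∈ range i, (1:ℝ)/(k+1)) + 1/(i+1) := by
      intro i; rw [Finset.sum_range_succ]
    have step : ∀ i ∈ range (n+1),
        ((n+1).choose (i+1) : ℝ) * t ^ (i+1) * (1 - t) ^ (n + 1 - (i+1)) *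
          (∑ k ∈ range (i+1), (1 : ℝ) / (k + 1))
        = ((n.choose i : ℝ) * t ^ i * (1 - t) ^ (n - i) * (∑ k ∈ range i, (1:ℝ)/(k+1))) * t
          + (n.choose i : ℝ) * t ^ (i+1) * (1 - t) ^ (n - i) / (i + 1)
          + ((n.choose (i+1) : ℝ) * t ^ (i+1) * (1 - t) ^ (n - (i+1)) * (∑ k ∈ range (i+1), (1:ℝ)/(k+1))) * (1 - t) := by
      intro i hi
      rw [hPascal i, hH i]
      have h1 : n + 1 - (i + 1) = n - i := by omega
      rw [h1]
      rcases Nat.lt_or_ge i n with h | h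
      · have h2 : n - i = (n - (i+1)) + 1 := by omega
        rw [h2, pow_succ]
        ring
      · have hin : i = n := by simp only [mem_range] at hi; omega
        subst hin
        simp [Nat.choose_succ_self]
        ring
    rw [Finset.sum_congr rfl step]
    rw [Finset.sum_add_distrib, Finset.sum_add_distrib, ← Finset.sum_mul, ← Finset.sum_mul]
    -- shift sum: Σ_{i ∈ range(n+1)} g(i+1) where g j = C(n,j) ... H_j, relate to Σ range (n+1) g j
    have hshift : ∑ i ∈ range (n+1), (n.choose (i+1) : ℝ) * t ^ (i+1) * (1 - t) ^ (n - (i+1)) * (∑ k ∈ range (i+1), (1:ℝ)/(k+1))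
        = ∑ i ∈ range (n+1), (n.choose i : ℝ) * t ^ i * (1 - t) ^ (n - i) * (∑ k ∈ range i, (1:ℝ)/(k+1)) := by
      rw [Finset.sum_range_succ' (fun j => (n.choose j : ℝ) * t ^ j * (1 - t) ^ (n - j) * (∑ k ∈ range j, (1:ℝ)/(k+1))) n]
      rw [Finset.sum_range_succ]
      simp [Nat.choose_succ_self]
    rw [hshift, ih, aux1]
    rw [Finset.sum_range_succ]
    -- push_cast
    ring

lemma aux3 (t : ℝ) (n : ℕ) :
    ∫ z in (0 : ℝ)..1, (1 - (t * z + 1 - t) ^ n) / (1 - z)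
      = ∑ k ∈ range n, (1 - (1 - t) ^ (k + 1)) / (k + 1) := by
  have hcong : ∫ z in (0 : ℝ)..1, (1 - (t * z + 1 - t) ^ n) / (1 - z)
      = ∫ z in (0 : ℝ)..1, ∑ k ∈ range n, t * (t * z + 1 - t) ^ k := by
    apply intervalIntegral.integral_congr_ae
    have hnull : (MeasureTheory.volume : Measure ℝ) {(1:ℝ)} = 0 := measure_singleton 1
    filter_upwards [MeasureTheory.measure_eq_zero_iff_ae_notMem.mp hnull] with z hz _
    have hz1 : z ≠ 1 := by simpa using hz
    have hgeo := geom_sum_mul (t * z + 1 - t) n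
    have hfac : t * z + 1 - t - 1 = -(t * (1 - z)) := by ring
    have h1 : (1 : ℝ) - (t * z + 1 - t) ^ n = (∑ k ∈ range n, (t * z + 1 - t) ^ k) * (t * (1 - z)) := by
      rw [hfac] at hgeo; linarith [hgeo]
    have h2 : (1:ℝ) - z ≠ 0 := sub_ne_zero.mpr (Ne.symm hz1)
    rw [h1, ← Finset.mul_sum]
    field_simp
  rw [hcong]
  rw [intervalIntegral.integral_finset_sum (fun k _ => by
    apply Continuous.intervalIntegrable
    continuity)]
  refine Finset.sum_congr rfl fun k _ => ?_
  have hderiv : ∀ z ∈ Set.uIcc (0:ℝ) 1,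
      HasDerivAt (fun z : ℝ => (t * z + 1 - t) ^ (k + 1) / (k + 1)) (t * (t * z + 1 - t) ^ k) z := by
    intro z _
    have h1 : HasDerivAt (fun z : ℝ => t * z + 1 - t) t z := by
      have h0 : (fun z : ℝ => t * z + 1 - t) = fun z => t * z + (1 - t) := by
        funext z; ring
      have hd := ((hasDerivAt_id z).const_mul t).add_const (1 - t)
      simp only [mul_one] at hd
      exact h0 ▸ hd
    have h2 := (h1.fun_pow (k + 1))
    have h3 := h2.div_const ((k : ℝ) + 1)
    refine h3.congr_deriv ?_
    have : ((k:ℝ) + 1) ≠ 0 := by positivity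
    -- push_cast
    rw [Nat.add_sub_cancel]
    push_cast
    field_simp
  rw [intervalIntegral.integral_eq_sub_of_hasDerivAt hderiv (by
    apply Continuous.intervalIntegrable; continuity)]
  have e1 : t * 1 + 1 - t = 1 := by ring
  have e2 : t * 0 + 1 - t = 1 - t := by ring
  rw [e1, e2]
  ring

/-- For every real `t ∈ [0,1]` and natural `n`,
`Σ_{i=0}^n C(n,i) t^i (1-t)^(n-i) H_i = ∫₀¹ (1 - (t·z + 1 - t)^n)/(1 - z) dz`,
where `H_i` is the `i`-th harmonic number (`H_0 = 0`). -/
theorem stmt11 (t : ℝ) (ht0 : 0 ≤ t) (ht1 : t ≤ 1) (n : ℕ) :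
    ∑ i ∈ Finset.range (n + 1),
        (n.choose i : ℝ) * t ^ i * (1 - t) ^ (n - i) *
          (∑ k ∈ Finset.range i, (1 : ℝ) / (k + 1))
      = ∫ z in (0 : ℝ)..1, (1 - (t * z + 1 - t) ^ n) / (1 - z) := by
  rw [aux3, aux2]
end

section
/- For every real t in [0,1] and every integer n ≥ 1, letting Δ_n = (1 - (1-t)^(n+1))/(n+1), the inequality Δ_{n-1} · (t(n-1)/2 + 1) ≥ Δ_n · (tn/2 + 1) holds. -/
lemma key13 (t : ℝ) (ht0 : 0 ≤ t) (ht1 : t ≤ 1) (n : ℕ) :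
    (1 - t) ^ n * (t ^ 2 * (n : ℝ) ^ 2 + 2 * t * n + 2 - t) ≤ 2 - t := by
  induction n with
  | zero => simp
  | succ m ih =>
    have hs : (0:ℝ) ≤ 1 - t := by linarith
    have hsp : (0:ℝ) ≤ (1 - t) ^ m := pow_nonneg hs m
    have hid : (1 - t) ^ (m + 1) * (t ^ 2 * ((m : ℝ) + 1) ^ 2 + 2 * t * ((m : ℝ) + 1) + 2 - t)
        = (1 - t) ^ m * (t ^ 2 * (m : ℝ) ^ 2 + 2 * t * m + 2 - t)
          - t ^ 3 * ((m : ℝ) + 1) ^ 2 * (1 - t) ^ m := by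
      rw [pow_succ]; ring
    have hnn : 0 ≤ t ^ 3 * ((m : ℝ) + 1) ^ 2 * (1 - t) ^ m := by positivity
    push_cast
    push_cast at ih
    linarith [hid, ih]

/-- For every real `t ∈ [0,1]` and integer `n ≥ 1`, letting
`Δ_k = (1 - (1-t)^(k+1))/(k+1)`, one has
`Δ_{n-1} · (t(n-1)/2 + 1) ≥ Δ_n · (tn/2 + 1)`. -/
theorem stmt13 (t : ℝ) (ht0 : 0 ≤ t) (ht1 : t ≤ 1) (n : ℕ) (hn : 1 ≤ n) :
    (1 - (1 - t) ^ (n + 1)) / ((n : ℝ) + 1) * (t * (n : ℝ) / 2 + 1)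
      ≤ (1 - (1 - t) ^ n) / (n : ℝ) * (t * ((n : ℝ) - 1) / 2 + 1) := by
  have hn1 : (1:ℝ) ≤ (n:ℝ) := by exact_mod_cast hn
  have hnp : (0:ℝ) < n := by linarith
  have hnp1 : (0:ℝ) < (n:ℝ) + 1 := by linarith
  have hkey := key13 t ht0 ht1 n
  rw [div_mul_eq_mul_div, div_mul_eq_mul_div, div_le_div_iff₀ hnp1 hnp]
  have hpow : (1 - t) ^ (n + 1) = (1 - t) ^ n * (1 - t) := pow_succ _ _
  rw [hpow]
  nlinarith [hkey, hnp, sq_nonneg ((n:ℝ))]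
end

section
/- For every t in [0,1), the function g_t(z) = (1 - t/2) - (1-t)^z · ((t²/2)·z² + t·z + 1 - t/2) is nondecreasing on [0, ∞), and hence nonnegative on [0, ∞) since g_t(0) = 0. -/
open Real Set

/-- Padé bound: for `0 < x ≤ 1`, `log x ≤ 2(x-1)/(x+1)`. -/
lemma aux14_log_pade {x : ℝ} (hx0 : 0 < x) (hx1 : x ≤ 1) :
    Real.log x ≤ 2 * (x - 1) / (x + 1) := by
  set F : ℝ → ℝ := fun y => 2 * (y - 1) / (y + 1) - Real.log y with hF
  have hderiv : ∀ y ∈ Ioc (0:ℝ) 1, HasDerivAt F (4 / (y+1)^2 - 1/y) y := by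
    intro y hy
    have hy0 : 0 < y := hy.1
    have h1 : HasDerivAt (fun y : ℝ => 2 * (y - 1) / (y + 1))
        ((2 * 1 * (y+1) - 2*(y-1) * 1) / (y+1)^2) y := by
      exact (((hasDerivAt_id y).sub_const 1).const_mul 2).div
        ((hasDerivAt_id y).add_const 1) (by nlinarith)
    have h2 : HasDerivAt Real.log (1/y) y := by
      simpa [one_div] using Real.hasDerivAt_log hy0.ne'
    have h3 := h1.sub h2
    refine h3.congr_deriv ?_
    ring
  have hanti : AntitoneOn F (Ioc (0:ℝ) 1) := by
    apply antitoneOn_of_deriv_nonpos (convex_Ioc 0 1)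
    · exact fun y hy => (hderiv y hy).continuousAt.continuousWithinAt
    · intro y hy
      rw [interior_Ioc] at hy
      exact (hderiv y (Ioo_subset_Ioc_self hy)).differentiableAt.differentiableWithinAt
    · intro y hy
      rw [interior_Ioc] at hy
      rw [(hderiv y (Ioo_subset_Ioc_self hy)).deriv]
      have hy0 : 0 < y := hy.1
      have hy1 : y < 1 := hy.2
      have : 4 / (y+1)^2 ≤ 1/y := by
        rw [div_le_div_iff₀ (by positivity) hy0]
        nlinarith
      linarith
  have hx : x ∈ Ioc (0:ℝ) 1 := ⟨hx0, hx1⟩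
  have h1 : (1:ℝ) ∈ Ioc (0:ℝ) 1 := by norm_num
  have := hanti hx h1 hx1
  simp only [hF, Real.log_one] at this
  norm_num at this
  linarith

/-- For every `t ∈ [0,1)`, the function
`g_t(z) = (1 - t/2) - (1-t)^z · ((t²/2)z² + tz + 1 - t/2)` is nondecreasing on
`[0, ∞)` and nonnegative on `[0, ∞)`. -/
theorem stmt14 (t : ℝ) (ht0 : 0 ≤ t) (ht1 : t < 1) :
    MonotoneOn
        (fun z : ℝ => (1 - t / 2) - (1 - t) ^ z * (t ^ 2 / 2 * z ^ 2 + t * z + 1 - t / 2))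
        (Set.Ici 0)
    ∧ ∀ z : ℝ, 0 ≤ z →
        0 ≤ (1 - t / 2) - (1 - t) ^ z * (t ^ 2 / 2 * z ^ 2 + t * z + 1 - t / 2) := by
  have ha : (0:ℝ) < 1 - t := by linarith
  set L := Real.log (1 - t) with hLdefL
  have hL : L ≤ -t := by
    have := Real.log_le_sub_one_of_pos ha
    linarith
  have hLA : L * (1 - t/2) + t ≤ 0 := by
    have hpade := aux14_log_pade ha (by linarith)
    have hmul : (1 - t/2) * L ≤ (1 - t/2) * (2 * ((1-t) - 1) / ((1-t) + 1)) := by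
      apply mul_le_mul_of_nonneg_left hpade (by linarith)
    have heq : (1 - t/2) * (2 * ((1-t) - 1) / ((1-t) + 1)) = -t := by
      have h2t : (2:ℝ) - t ≠ 0 := by linarith
      field_simp
      ring
    nlinarith
  -- h z := L * P z + t^2 * z + t, show h z ≤ 0 for z ≥ 0
  set h : ℝ → ℝ := fun z => L * (t^2/2*z^2 + t*z + 1 - t/2) + t^2*z + t with hhdef
  have hderiv : ∀ z : ℝ, HasDerivAt h (L * (t^2*z + t) + t^2) z := by
    intro z
    have h1 : HasDerivAt (fun z : ℝ => t^2/2*z^2 + t*z + 1 - t/2)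
        (t^2*z + t) z := by
      have h := ((((hasDerivAt_pow 2 z).const_mul (t^2/2)).add
        ((hasDerivAt_id' z).const_mul t)).add_const 1).sub_const (t/2)
      refine h.congr_deriv ?_
      push_cast
      ring
    have h2 := (h1.const_mul L).add ((hasDerivAt_id' z).const_mul (t^2)) |>.add_const t
    refine h2.congr_deriv ?_
    ring
  have hhneg : ∀ z : ℝ, 0 ≤ z → h z ≤ 0 := by
    intro z hz
    have hanti : AntitoneOn h (Ici (0:ℝ)) := by
      apply antitoneOn_of_deriv_nonpos (convex_Ici 0)
      · exact fun y _ => (hderiv y).continuousAt.continuousWithinAt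
      · intro y hy
        exact (hderiv y).differentiableAt.differentiableWithinAt
      · intro y hy
        rw [interior_Ici] at hy
        rw [(hderiv y).deriv]
        have hy0 : (0:ℝ) < y := hy
        have h1 : 0 ≤ t^2*y + t := by positivity
        nlinarith [mul_nonneg (by linarith : (0:ℝ) ≤ -t - L) h1, mul_nonneg (mul_nonneg (mul_nonneg ht0 ht0) ht0) hy0.le]
    have h0 : h 0 ≤ 0 := by
      simp only [hhdef]
      nlinarith
    calc h z ≤ h 0 := hanti (by norm_num) (mem_Ici.mpr hz) hz
      _ ≤ 0 := h0
  -- derivative of f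
  set f : ℝ → ℝ := fun z => (1 - t / 2) - (1 - t) ^ z * (t ^ 2 / 2 * z ^ 2 + t * z + 1 - t / 2) with hfdef
  have hfderiv : ∀ z : ℝ, HasDerivAt f (-((1-t)^z * h z)) z := by
    intro z
    have hexp : HasDerivAt (fun z : ℝ => (1-t) ^ z) ((1-t)^z * L) z :=
      (Real.hasStrictDerivAt_const_rpow ha z).hasDerivAt
    have hP : HasDerivAt (fun z : ℝ => t^2/2*z^2 + t*z + 1 - t/2) (t^2*z + t) z := by
      have h := ((((hasDerivAt_pow 2 z).const_mul (t^2/2)).add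
        ((hasDerivAt_id' z).const_mul t)).add_const 1).sub_const (t/2)
      refine h.congr_deriv ?_
      push_cast
      ring
    have := (hexp.mul hP).const_sub (1 - t/2)
    refine this.congr_deriv ?_
    simp only [hhdef]
    ring
  have hmono : MonotoneOn f (Ici (0:ℝ)) := by
    apply monotoneOn_of_deriv_nonneg (convex_Ici 0)
    · exact fun y _ => (hfderiv y).continuousAt.continuousWithinAt
    · intro y hy
      exact (hfderiv y).differentiableAt.differentiableWithinAt
    · intro y hy
      rw [interior_Ici] at hy
      rw [(hfderiv y).deriv]
      have hpos : (0:ℝ) < (1-t)^y := Real.rpow_pos_of_pos ha y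
      have := hhneg y hy.le
      nlinarith
  refine ⟨hmono, fun z hz => ?_⟩
  have hf0 : f 0 = 0 := by
    simp [hfdef, Real.rpow_zero]
  have := hmono (mem_Ici.mpr le_rfl) (mem_Ici.mpr hz) hz
  rw [hf0] at this
  exact this
end

section
/- For every real t in [0,1] and all natural numbers 1 ≤ s ≤ ℓ, defining Ĥ_n = ∫₀¹ (1 - (t·z + 1 - t)^n)/(1 - z) dz, we have Ĥ_s / Ĥ_ℓ ≥ ln(t·s/2 + 1) / ln(t·ℓ/2 + 1), provided Ĥ_ℓ > 0 and ln(tℓ/2 + 1) > 0. -/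
open Real Set MeasureTheory intervalIntegral Finset


lemma pade_lower {x : ℝ} (hx : 0 ≤ x) : 2*x/(x+2) ≤ Real.log (1+x) := by
  have hda : ∀ y : ℝ, 0 < y → HasDerivAt (fun y : ℝ => Real.log (1+y) - 2*y/(y+2))
      (1/(1+y) - 4/(y+2)^2) y := by
    intro y hy
    have hl : HasDerivAt (fun y : ℝ => Real.log (1+y)) (1/(1+y)) y := by
      simpa using ((hasDerivAt_id y).const_add 1).log (by positivity)
    have hd : HasDerivAt (fun y : ℝ => 2*y/(y+2)) (4/(y+2)^2) y := by
      have h2 : HasDerivAt (fun y : ℝ => 2*y) 2 y := by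
        simpa using (hasDerivAt_id y).const_mul 2
      have h3 : HasDerivAt (fun y : ℝ => y+2) 1 y := (hasDerivAt_id y).add_const 2
      have := h2.div h3 (by positivity)
      refine this.congr_deriv ?_
      ring
    exact hl.sub hd
  have hmono : MonotoneOn (fun y : ℝ => Real.log (1+y) - 2*y/(y+2)) (Ici 0) := by
    apply monotoneOn_of_deriv_nonneg (convex_Ici 0)
    · apply ContinuousOn.sub
      · apply ContinuousOn.log (by fun_prop)
        intro y hy; simp at hy; positivity
      · apply ContinuousOn.div (by fun_prop) (by fun_prop)
        intro y hy; simp at hy; positivity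
    · rw [interior_Ici]
      intro y hy
      exact ((hda y hy).differentiableAt).differentiableWithinAt
    · rw [interior_Ici]
      intro y hy
      rw [(hda y hy).deriv]
      have hy' := mem_Ioi.1 hy
      rw [sub_nonneg, div_le_div_iff₀ (by positivity) (by positivity)]
      nlinarith [sq_nonneg y]
  have := hmono (self_mem_Ici) (mem_Ici.2 hx) hx
  simp at this
  linarith

lemma pade_upper {x : ℝ} (hx : 0 ≤ x) : Real.log (1+x) ≤ x*(x+2)/(2*(x+1)) := by
  have hda : ∀ y : ℝ, 0 < y → HasDerivAt (fun y : ℝ => y*(y+2)/(2*(y+1)) - Real.log (1+y))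
      ((y^2+2*y+2)/(2*(y+1)^2) - 1/(1+y)) y := by
    intro y hy
    have hl : HasDerivAt (fun y : ℝ => Real.log (1+y)) (1/(1+y)) y := by
      simpa using ((hasDerivAt_id y).const_add 1).log (by positivity)
    have hd : HasDerivAt (fun y : ℝ => y*(y+2)/(2*(y+1))) ((y^2+2*y+2)/(2*(y+1)^2)) y := by
      have h2 : HasDerivAt (fun y : ℝ => y*(y+2)) (2*y+2) y := by
        have := (hasDerivAt_id y).mul ((hasDerivAt_id y).add_const 2)
        refine this.congr_deriv ?_
        simp only [id]; ring
      have h3 : HasDerivAt (fun y : ℝ => 2*(y+1)) 2 y := by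
        simpa using ((hasDerivAt_id y).add_const 1).const_mul 2
      have := h2.div h3 (by positivity)
      refine this.congr_deriv ?_
      field_simp
      ring
    exact hd.sub hl
  have hmono : MonotoneOn (fun y : ℝ => y*(y+2)/(2*(y+1)) - Real.log (1+y)) (Ici 0) := by
    apply monotoneOn_of_deriv_nonneg (convex_Ici 0)
    · apply ContinuousOn.sub
      · apply ContinuousOn.div (by fun_prop) (by fun_prop)
        intro y hy; simp at hy; positivity
      · apply ContinuousOn.log (by fun_prop)
        intro y hy; simp at hy; positivity
    · rw [interior_Ici]
      intro y hy
      exact ((hda y hy).differentiableAt).differentiableWithinAt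
    · rw [interior_Ici]
      intro y hy
      rw [(hda y hy).deriv]
      have hy' := mem_Ioi.1 hy
      rw [sub_nonneg, div_le_div_iff₀ (by positivity) (by positivity)]
      nlinarith [sq_nonneg y]
  have := hmono (self_mem_Ici) (mem_Ici.2 hx) hx
  simp at this
  linarith

lemma Fbound (t : ℝ) (ht0 : 0 < t) (ht1 : t ≤ 1) (m : ℕ) :
    (1-t)^m * (t^2*(m:ℝ)^2 + 2*t*m + 2 - t) ≤ 2 - t := by
  induction m with
  | zero => simp
  | succ m ih =>
    have hq : (0:ℝ) ≤ 1 - t := by linarith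
    have key : (1-t) * (t^2*((m:ℝ)+1)^2 + 2*t*((m:ℝ)+1) + 2 - t)
        = (t^2*(m:ℝ)^2 + 2*t*m + 2 - t) - t^3*((m:ℝ)+1)^2 := by ring
    push_cast
    calc (1-t)^(m+1) * (t^2*((m:ℝ)+1)^2 + 2*t*((m:ℝ)+1) + 2 - t)
        = (1-t)^m * ((1-t) * (t^2*((m:ℝ)+1)^2 + 2*t*((m:ℝ)+1) + 2 - t)) := by ring
      _ ≤ (1-t)^m * (t^2*(m:ℝ)^2 + 2*t*m + 2 - t) := by
          rw [key]
          apply mul_le_mul_of_nonneg_left _ (pow_nonneg hq m)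
          have := mul_nonneg (pow_nonneg ht0.le 3) (sq_nonneg ((m:ℝ)+1))
          linarith
      _ ≤ 2 - t := ih

lemma keyII (t : ℝ) (ht0 : 0 < t) (ht1 : t ≤ 1) (k : ℕ) :
    (1-(1-t)^(k+2))/((k:ℝ)+2) * (t*k+t+2) ≤ (1-(1-t)^(k+1))/((k:ℝ)+1) * (t*k+2) := by
  set q : ℝ := 1 - t with hqdef
  set p : ℝ := 1 - q^(k+1) with hpdef
  have hA : t*((k:ℝ)+1)*(t*((k:ℝ)+1)+2) ≤ p * (t*((k:ℝ)+1)*(t*((k:ℝ)+1)+2) + 2 - t) := by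
    have hF := Fbound t ht0 ht1 (k+1)
    push_cast at hF
    have h1 : q^(k+1) * (t*((k:ℝ)+1)*(t*((k:ℝ)+1)+2) + 2 - t) ≤ 2 - t := by
      calc q^(k+1) * (t*((k:ℝ)+1)*(t*((k:ℝ)+1)+2) + 2 - t)
          = (1-t)^(k+1) * (t^2*((k:ℝ)+1)^2 + 2*t*((k:ℝ)+1) + 2 - t) := by rw [hqdef]; ring
        _ ≤ 2 - t := hF
    have hp : p * (t*((k:ℝ)+1)*(t*((k:ℝ)+1)+2) + 2 - t)
        = (t*((k:ℝ)+1)*(t*((k:ℝ)+1)+2) + 2 - t)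
          - q^(k+1) * (t*((k:ℝ)+1)*(t*((k:ℝ)+1)+2) + 2 - t) := by rw [hpdef]; ring
    linarith
  have hq2 : q^(k+2) = q * q^(k+1) := by ring
  have hid : 1 - q^(k+2) = t + q * p := by rw [hq2, hpdef]; ring
  rw [div_mul_eq_mul_div, div_mul_eq_mul_div, div_le_div_iff₀ (by positivity) (by positivity),
    hid]
  have hident : (t+q*p)*(t*(k:ℝ)+t+2)*((k:ℝ)+1) - p*(t*(k:ℝ)+2)*((k:ℝ)+2)
      = t*((k:ℝ)+1)*(t*((k:ℝ)+1)+2) - p*(t*((k:ℝ)+1)*(t*((k:ℝ)+1)+2)+2-t) := by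
    rw [hqdef]; ring
  linarith

lemma keyI (t : ℝ) (ht0 : 0 < t) (k : ℕ) :
    (Real.log (t*((k:ℝ)+1)/2+1) - Real.log (t*(k:ℝ)/2+1)) * (t*(k:ℝ)+2)
      ≤ (Real.log (t*((k:ℝ)+2)/2+1) - Real.log (t*((k:ℝ)+1)/2+1)) * (t*(k:ℝ)+t+2) := by
  have hk : (0:ℝ) ≤ (k:ℝ) := Nat.cast_nonneg k
  set c : ℝ := t*(k:ℝ)+2 with hc
  have hcpos : 0 < c := by positivity
  set u : ℝ := t/c with hu
  set v : ℝ := t/(c+t) with hv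
  have hupos : 0 < u := by positivity
  have hvpos : 0 < v := by positivity
  have hbk : Real.log (t*((k:ℝ)+1)/2+1) - Real.log (t*(k:ℝ)/2+1) = Real.log (1+u) := by
    have h1 : t*((k:ℝ)+1)/2+1 = (1+u)*(t*(k:ℝ)/2+1) := by
      rw [hu, hc]; field_simp; ring
    rw [h1, Real.log_mul (by positivity) (by positivity)]; ring
  have hbk1 : Real.log (t*((k:ℝ)+2)/2+1) - Real.log (t*((k:ℝ)+1)/2+1) = Real.log (1+v) := by
    have h1 : t*((k:ℝ)+2)/2+1 = (1+v)*(t*((k:ℝ)+1)/2+1) := by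
      rw [hv, hc]; field_simp; ring
    rw [h1, Real.log_mul (by positivity) (by positivity)]; ring
  rw [hbk, hbk1]
  have hct : t*(k:ℝ)+t+2 = c+t := by rw [hc]; ring
  rw [hct]
  have h2 : Real.log (1+u) * c ≤ (u*(u+2)/(2*(u+1))) * c :=
    mul_le_mul_of_nonneg_right (pade_upper hupos.le) hcpos.le
  have h3 : (2*v/(v+2)) * (c+t) ≤ Real.log (1+v) * (c+t) :=
    mul_le_mul_of_nonneg_right (pade_lower hvpos.le) (by positivity)
  have h4 : (u*(u+2)/(2*(u+1))) * c ≤ (2*v/(v+2)) * (c+t) := by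
    have e1 : (u*(u+2)/(2*(u+1))) * c = t*(t+2*c)/(2*(t+c)) := by
      rw [hu]; field_simp
    have e2 : (2*v/(v+2)) * (c+t) = 2*t*(c+t)/(3*t+2*c) := by
      rw [hv]; field_simp; ring
    rw [e1, e2, div_le_div_iff₀ (by positivity) (by positivity)]
    nlinarith [sq_nonneg t, mul_nonneg (sq_nonneg t) ht0.le]
  calc Real.log (1+u) * c ≤ (u*(u+2)/(2*(u+1))) * c := h2
    _ ≤ (2*v/(v+2)) * (c+t) := h4
    _ ≤ Real.log (1+v) * (c+t) := h3

lemma integral_pow_piece (t : ℝ) (k : ℕ) :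
    ∫ z in (0:ℝ)..1, t*(t*z+1-t)^k = (1 - (1-t)^(k+1))/((k:ℝ)+1) := by
  have hderiv : ∀ z ∈ Set.uIcc (0:ℝ) 1,
      HasDerivAt (fun z : ℝ => (t*z+1-t)^(k+1)/((k:ℝ)+1)) (t*(t*z+1-t)^k) z := by
    intro z _
    have h1 : HasDerivAt (fun z : ℝ => t*z+1-t) t z := by
      simpa using (((hasDerivAt_id z).const_mul t).add_const 1).sub_const t
    have h2 := (h1.pow (k+1)).div_const ((k:ℝ)+1)
    refine h2.congr_deriv ?_
    have : ((k:ℝ)+1) ≠ 0 := by positivity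
    push_cast
    field_simp
  have hint : IntervalIntegrable (fun z : ℝ => t*(t*z+1-t)^k) volume 0 1 := by
    apply Continuous.intervalIntegrable
    fun_prop
  rw [integral_eq_sub_of_hasDerivAt hderiv hint]
  have hk1 : ((k:ℝ)+1) ≠ 0 := by positivity
  norm_num
  field_simp

lemma H_eq_sum (t : ℝ) (ht0 : 0 < t) (ht1 : t ≤ 1) (n : ℕ) :
    (∫ z in (0:ℝ)..1, (1 - (t*z+1-t)^n)/(1-z))
      = ∑ k ∈ Finset.range n, (1 - (1-t)^(k+1))/((k:ℝ)+1) := by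
  have hae : ∀ᵐ x : ℝ, x ∈ Set.uIoc (0:ℝ) 1 →
      (1 - (t*x+1-t)^n)/(1-x) = ∑ k ∈ Finset.range n, t*(t*x+1-t)^k := by
    have h1 : ∀ᵐ x : ℝ, x ≠ 1 := by
      rw [ae_iff]
      simp only [not_not, Set.setOf_eq_eq_singleton]
      exact Real.volume_singleton
    filter_upwards [h1] with x hx _
    have hz : 1 - x ≠ 0 := fun h => hx (by linarith)
    set w : ℝ := t*x+1-t with hw
    have hgeom : 1 - w^n = (∑ k ∈ Finset.range n, w^k) * (1 - w) := by
      have := geom_sum_mul w n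
      linarith [this]
    have h1w : 1 - w = t*(1-x) := by rw [hw]; ring
    rw [hgeom, h1w]
    rw [div_eq_iff hz]
    rw [Finset.sum_mul, Finset.sum_mul]
    apply Finset.sum_congr rfl
    intro k _
    ring
  rw [integral_congr_ae hae]
  rw [intervalIntegral.integral_finset_sum]
  · exact Finset.sum_congr rfl fun k _ => integral_pow_piece t k
  · intro k _
    apply Continuous.intervalIntegrable
    fun_prop

/-- For every real `t ∈ [0,1]` and naturals `1 ≤ s ≤ ℓ`, with
`Ĥ_n = ∫₀¹ (1 - (tz + 1 - t)^n)/(1 - z) dz`, provided `Ĥ_ℓ > 0` and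
`ln(tℓ/2 + 1) > 0`, one has `Ĥ_s / Ĥ_ℓ ≥ ln(ts/2 + 1) / ln(tℓ/2 + 1)`. -/
theorem stmt15 (t : ℝ) (ht0 : 0 ≤ t) (ht1 : t ≤ 1) (s ℓ : ℕ) (hs : 1 ≤ s) (hsl : s ≤ ℓ)
    (H : ℕ → ℝ)
    (hH : ∀ n : ℕ, H n = ∫ z in (0 : ℝ)..1, (1 - (t * z + 1 - t) ^ n) / (1 - z))
    (hpos : 0 < H ℓ) (hlog : 0 < Real.log (t * (ℓ : ℝ) / 2 + 1)) :
    Real.log (t * (s : ℝ) / 2 + 1) / Real.log (t * (ℓ : ℝ) / 2 + 1) ≤ H s / H ℓ := by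
  -- t > 0
  rcases eq_or_lt_of_le ht0 with h | htpos
  · exfalso; rw [← h] at hlog; simp at hlog
  clear ht0
  set A : ℕ → ℝ := fun k => (1 - (1-t)^(k+1))/((k:ℝ)+1) with hA
  set B : ℕ → ℝ := fun k => Real.log (t*((k:ℝ)+1)/2+1) - Real.log (t*(k:ℝ)/2+1) with hB
  have hApos : ∀ k, 0 < A k := by
    intro k
    have h1 : (1-t)^(k+1) < 1 := by
      apply pow_lt_one₀ (by linarith) (by linarith) (by omega)
    have : (0:ℝ) < (k:ℝ)+1 := by positivity
    apply div_pos (by linarith) this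
  have hBpos : ∀ k, 0 < B k := by
    intro k
    apply sub_pos.2
    apply Real.log_lt_log (by positivity)
    have : (0:ℝ) ≤ (k:ℝ) := Nat.cast_nonneg k
    nlinarith
  -- adjacency
  have adj : ∀ k, A (k+1) * B k ≤ A k * B (k+1) := by
    intro k
    have hI := keyI t htpos k
    have hII := keyII t htpos ht1 k
    have hBk1 : B (k+1) = Real.log (t*((k:ℝ)+2)/2+1) - Real.log (t*((k:ℝ)+1)/2+1) := by
      rw [hB]; push_cast; ring_nf
    have hAk1 : A (k+1) = (1-(1-t)^(k+2))/((k:ℝ)+2) := by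
      rw [hA]; push_cast; ring_nf
    rw [hBk1, hAk1]
    set a1 := (1-(1-t)^(k+2))/((k:ℝ)+2)
    set a0 := (1-(1-t)^(k+1))/((k:ℝ)+1)
    set b1 := Real.log (t*((k:ℝ)+2)/2+1) - Real.log (t*((k:ℝ)+1)/2+1)
    set b0 := Real.log (t*((k:ℝ)+1)/2+1) - Real.log (t*(k:ℝ)/2+1)
    have hb0 : 0 < b0 := hBpos k
    have hb1 : 0 < b1 := by rw [← hBk1]; exact hBpos (k+1)
    have ha0 : 0 < a0 := hApos k
    have ha1 : 0 < a1 := by rw [← hAk1]; exact hApos (k+1)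
    have hc : (0:ℝ) < t*(k:ℝ)+2 := by
      have : (0:ℝ) ≤ (k:ℝ) := Nat.cast_nonneg k
      nlinarith
    have hd : (0:ℝ) < t*(k:ℝ)+t+2 := by linarith
    -- hII : a1 * (t k + t + 2) ≤ a0 * (t k + 2), hI : b0 * (tk+2) ≤ b1 * (tk+t+2)
    have m1 := mul_le_mul_of_nonneg_right hII hb0.le
    have m2 := mul_le_mul_of_nonneg_left hI ha0.le
    have h3 : (a1 * b0) * ((t*(k:ℝ)+t+2)) ≤ (a0 * b1) * ((t*(k:ℝ)+t+2)) := by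
      nlinarith [m1, m2]
    exact le_of_mul_le_mul_right h3 hd
  -- pairwise
  have pair : ∀ k j, j ≤ k → A k * B j ≤ A j * B k := by
    intro k
    induction k with
    | zero => intro j hj; interval_cases j; exact le_refl _
    | succ k ih =>
      intro j hj
      rcases Nat.eq_or_lt_of_le hj with h | h
      · rw [h]
      · have hjk : j ≤ k := by omega
        have h1 := ih j hjk
        have h2 := adj k
        have h1b := mul_le_mul_of_nonneg_right h1 (hBpos (k+1)).le
        have h2b := mul_le_mul_of_nonneg_right h2 (hBpos j).le
        have h3 : (A (k+1) * B j) * B k ≤ (A j * B (k+1)) * B k := by nlinarith [h1b, h2b]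
        exact le_of_mul_le_mul_right h3 (hBpos k)
  -- sum formulas
  have hHsum : ∀ n, H n = ∑ k ∈ Finset.range n, A k := by
    intro n; rw [hH n, H_eq_sum t htpos ht1 n]
  have hLsum : ∀ n : ℕ, Real.log (t*(n:ℝ)/2+1) = ∑ k ∈ Finset.range n, B k := by
    intro n
    have := Finset.sum_range_sub (fun k : ℕ => Real.log (t*(k:ℝ)/2+1)) n
    rw [show Real.log (t*(n:ℝ)/2+1) = Real.log (t*(n:ℝ)/2+1) - Real.log (t*(0:ℕ)/2+1) by
      simp]
    rw [← this]
    apply Finset.sum_congr rfl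
    intro k _
    rw [hB]
    push_cast
    ring_nf
  rw [div_le_div_iff₀ hlog hpos, hHsum s, hHsum ℓ, hLsum s, hLsum ℓ]
  have hsplitA : ∑ k ∈ Finset.range ℓ, A k
      = ∑ k ∈ Finset.range s, A k + ∑ k ∈ Finset.Ico s ℓ, A k := by
    simp only [Finset.range_eq_Ico]
    exact (Finset.sum_Ico_consecutive _ (Nat.zero_le s) hsl).symm
  have hsplitB : ∑ k ∈ Finset.range ℓ, B k
      = ∑ k ∈ Finset.range s, B k + ∑ k ∈ Finset.Ico s ℓ, B k := by
    simp only [Finset.range_eq_Ico]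
    exact (Finset.sum_Ico_consecutive _ (Nat.zero_le s) hsl).symm
  have cross : (∑ k ∈ Finset.Ico s ℓ, A k) * (∑ j ∈ Finset.range s, B j)
      ≤ (∑ j ∈ Finset.range s, A j) * (∑ k ∈ Finset.Ico s ℓ, B k) := by
    rw [Finset.sum_mul_sum, Finset.sum_mul_sum]
    rw [Finset.sum_comm]
    apply Finset.sum_le_sum
    intro j hj
    apply Finset.sum_le_sum
    intro k hk
    have hjs : j < s := Finset.mem_range.1 hj
    have hks : s ≤ k := (Finset.mem_Ico.1 hk).1
    exact pair k j (by omega)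
  rw [hsplitA, hsplitB]
  nlinarith [cross]
end

section
/- Fix a natural number n ≥ 1 and define Z_n(z) = (1 - z^n) / (1 - (1 - (1 - z)/e)^n) for z in [0, 1). Then Z_n is nondecreasing on [0, 1). -/
open Finset

/-- Fix `n ≥ 1` and `Z_n(z) = (1 - z^n)/(1 - (1 - (1-z)/e)^n)`. Then `Z_n` is
nondecreasing on `[0, 1)`. -/
theorem stmt18 (n : ℕ) (hn : 1 ≤ n) :
    MonotoneOn
      (fun z : ℝ => (1 - z ^ n) / (1 - (1 - (1 - z) / Real.exp 1) ^ n))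
      (Set.Ico (0 : ℝ) 1) := by
  have he : (1:ℝ) < Real.exp 1 := by
    have h := Real.exp_one_gt_d9; norm_num at h; linarith
  have he0 : (0:ℝ) < Real.exp 1 := by linarith
  have hgprop : ∀ z : ℝ, 0 ≤ z → z < 1 →
      0 ≤ 1 - (1 - z) / Real.exp 1 ∧ z ≤ 1 - (1 - z) / Real.exp 1 ∧
        1 - (1 - z) / Real.exp 1 < 1 := by
    intro z hz0 hz1
    have h1 : 0 < 1 - z := by linarith
    have h2 : (1 - z)/Real.exp 1 < 1 - z := by
      rw [div_lt_iff₀ he0]; nlinarith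
    have h3 : 0 < (1 - z)/Real.exp 1 := by positivity
    exact ⟨by linarith, by linarith, by linarith⟩
  have hden : ∀ z : ℝ, 0 ≤ z → z < 1 → 0 < 1 - (1 - (1 - z) / Real.exp 1) ^ n := by
    intro z hz0 hz1
    obtain ⟨h0, h1, h2⟩ := hgprop z hz0 hz1
    have := pow_lt_one₀ h0 h2 (by omega : n ≠ 0)
    linarith
  have key : ∀ z : ℝ, 0 ≤ z → z < 1 →
      z ^ (n-1) * (1 - (1 - (1 - z) / Real.exp 1) ^ n) ≤
        (1 - z ^ n) * (1 - (1 - z) / Real.exp 1) ^ (n-1) / Real.exp 1 := by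
    intro z hz0 hz1
    obtain ⟨hg0, hzg, hg1⟩ := hgprop z hz0 hz1
    set g : ℝ := 1 - (1 - z) / Real.exp 1 with hgdef
    have h1 : 1 - z ^ n = (1 - z) * ∑ k ∈ range n, z ^ k := by
      linear_combination geom_sum_mul z n
    have h2 : 1 - g ^ n = (1 - g) * ∑ k ∈ range n, g ^ k := by
      linear_combination geom_sum_mul g n
    have hterm : ∀ k ∈ range n, z ^ (n-1) * g ^ k ≤ z ^ k * g ^ (n-1) := by
      intro k hk
      rw [mem_range] at hk
      have hk' : k + (n - 1 - k) = n - 1 := by omega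
      have hpow : z ^ (n-1-k) ≤ g ^ (n-1-k) := pow_le_pow_left₀ hz0 hzg _
      have hzsplit : z ^ (n-1) = z ^ k * z ^ (n-1-k) := by rw [← pow_add, hk']
      have hgsplit : g ^ (n-1) = g ^ k * g ^ (n-1-k) := by rw [← pow_add, hk']
      calc z ^ (n-1) * g ^ k = (z ^ k * g ^ k) * z ^ (n-1-k) := by
            rw [hzsplit]; ring
        _ ≤ (z ^ k * g ^ k) * g ^ (n-1-k) :=
            mul_le_mul_of_nonneg_left hpow
              (mul_nonneg (pow_nonneg hz0 _) (pow_nonneg hg0 _))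
        _ = z ^ k * g ^ (n-1) := by rw [hgsplit]; ring
    have hsum : z^(n-1) * ∑ k ∈ range n, g^k ≤ (∑ k ∈ range n, z^k) * g^(n-1) := by
      rw [mul_sum, sum_mul]
      exact sum_le_sum hterm
    have hz1' : (0:ℝ) ≤ 1 - z := by linarith
    have hfac : (0:ℝ) ≤ (1 - z) / Real.exp 1 := by positivity
    calc z^(n-1) * (1 - g^n)
        = (1-z)/Real.exp 1 * (z^(n-1) * ∑ k ∈ range n, g^k) := by
          rw [h2, hgdef]; ring
      _ ≤ (1-z)/Real.exp 1 * ((∑ k ∈ range n, z^k) * g^(n-1)) :=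
          mul_le_mul_of_nonneg_left hsum hfac
      _ = (1 - z^n) * g^(n-1) / Real.exp 1 := by rw [h1]; ring
  have hderiv : ∀ x : ℝ, 0 ≤ x → x < 1 → HasDerivAt
      (fun z : ℝ => (1 - z ^ n) / (1 - (1 - (1 - z) / Real.exp 1) ^ n))
      ((-((n:ℝ) * x^(n-1)) * (1 - (1 - (1-x)/Real.exp 1)^n)
        - (1 - x^n) * (-((n:ℝ) * (1 - (1-x)/Real.exp 1)^(n-1) * (1/Real.exp 1))))
        / (1 - (1 - (1-x)/Real.exp 1)^n)^2) x := by
    intro x hx0 hx1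
    have hF : HasDerivAt (fun z : ℝ => 1 - z ^ n) (-((n:ℝ) * x^(n-1))) x := by
      simpa using (hasDerivAt_pow n x).const_sub 1
    have hg : HasDerivAt (fun z : ℝ => 1 - (1 - z)/Real.exp 1) (1/Real.exp 1) x := by
      have h0 : HasDerivAt (fun z : ℝ => z) 1 x := hasDerivAt_id x
      have h1 : HasDerivAt (fun z : ℝ => (1 - z)/Real.exp 1) (-1/Real.exp 1) x :=
        (h0.const_sub 1).div_const _
      have h2 := h1.const_sub 1
      rw [show (1:ℝ)/Real.exp 1 = -(-1/Real.exp 1) by ring]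
      exact h2
    have hG : HasDerivAt (fun z : ℝ => 1 - (1 - (1 - z)/Real.exp 1)^n)
        (-((n:ℝ) * (1 - (1-x)/Real.exp 1)^(n-1) * (1/Real.exp 1))) x := by
      simpa using (hg.pow n).const_sub 1
    exact hF.div hG (ne_of_gt (hden x hx0 hx1))
  apply monotoneOn_of_deriv_nonneg (convex_Ico 0 1)
  · apply ContinuousOn.div
    · fun_prop
    · fun_prop
    · intro z hz
      exact ne_of_gt (hden z hz.1 hz.2)
  · rw [interior_Ico]
    intro x hx
    exact (hderiv x hx.1.le hx.2).differentiableAt.differentiableWithinAt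
  · rw [interior_Ico]
    intro x hx
    rw [(hderiv x hx.1.le hx.2).deriv]
    apply div_nonneg _ (sq_nonneg _)
    have hkey := key x hx.1.le hx.2
    have h : (0:ℝ) ≤ (n:ℝ) * ((1 - x^n) * (1 - (1-x)/Real.exp 1)^(n-1) / Real.exp 1
        - x^(n-1) * (1 - (1 - (1-x)/Real.exp 1)^n)) :=
      mul_nonneg (Nat.cast_nonneg n) (by linarith)
    have heq : -((n:ℝ) * x^(n-1)) * (1 - (1 - (1-x)/Real.exp 1)^n)
        - (1 - x^n) * -((n:ℝ) * (1 - (1-x)/Real.exp 1)^(n-1) * (1/Real.exp 1))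
        = (n:ℝ) * ((1 - x^n) * (1 - (1-x)/Real.exp 1)^(n-1) / Real.exp 1
        - x^(n-1) * (1 - (1 - (1-x)/Real.exp 1)^n)) := by ring
    rw [heq]
    exact h
end
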